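/- arXiv:2505.21259 — 4 statements merged into one kernel-verified Lean document; each statement's English description precedes it below -/
import Mathlib

section
/- Let 0 < r_e < r_s, a_s = r_s − r_e, d_max = √(r_s² − r_e²), and let N be a positive integer. Let Θ_1, …, Θ_N be independent random variables, each uniformly distributed on [−π, π], and set D_k = √(r_e² + r_s² − 2 r_e r_s cos Θ_k). Then for every x with a_s ≤ x ≤ d_max, P(min_{1≤k≤N} D_k ≤ x) = 1 − [1 − (1/π)·arccos(1 − (x² − a_s²)/(2 r_e r_s))]^N, and for x < a_s this probability is 0. -/
open MeasureTheory ProbabilityTheory Real Set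

/-!
A satellite at central angle θ is within distance x of the user iff
cos θ ≥ y := 1 - (x² - a_s²) / (2 r_e r_s), by the law of cosines. For θ uniform on [-π, π] this
is the event |θ| ≤ arccos y, of probability arccos y / π. The minimum distance is at most x iff
some satellite is within distance x, and by independence the complementary event has
probability (1 - arccos y / π) ^ N. Every distance is at least a_s, which gives the second claim.
-/

theorem ciInf_le_iff_exists_le {ι α : Type*} [Finite ι] [Nonempty ι]
    [ConditionallyCompleteLinearOrder α] {f : ι → α} {a : α} :
    iInf f ≤ a ↔ ∃ i, f i ≤ a := by
  obtain ⟨i, hi⟩ := exists_eq_ciInf_of_finite (f := f)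
  exact ⟨fun h => ⟨i, hi ▸ h⟩,
    fun ⟨j, hj⟩ => (ciInf_le (Set.finite_range f).bddBelow j).trans hj⟩

theorem ENNReal.one_sub_one_sub_ofReal_pow {p : ℝ} (hp₀ : 0 ≤ p) (hp₁ : p ≤ 1) (n : ℕ) :
    1 - (1 - ENNReal.ofReal p) ^ n = ENNReal.ofReal (1 - (1 - p) ^ n) := by
  rw [← ENNReal.ofReal_one, ← ENNReal.ofReal_sub _ hp₀, ← ENNReal.ofReal_pow (by linarith),
    ← ENNReal.ofReal_sub _ (pow_nonneg (by linarith) n)]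

theorem ProbabilityTheory.iIndepFun.measure_iUnion_preimage {Ω ι β : Type*}
    [MeasurableSpace Ω] [MeasurableSpace β] [Fintype ι] {P : Measure Ω} [IsProbabilityMeasure P]
    {X : ι → Ω → β} (hX : iIndepFun X P) (hmeas : ∀ i, Measurable (X i))
    {A : Set β} (hA : MeasurableSet A) {q : ENNReal} (hq : ∀ i, P (X i ⁻¹' A) = q) :
    P (⋃ i, X i ⁻¹' A) = 1 - (1 - q) ^ Fintype.card ι := by
  have hcompl : P (⋃ i, X i ⁻¹' A)ᶜ = (1 - q) ^ Fintype.card ι := by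
    have h := hX.measure_inter_preimage_eq_mul Finset.univ (sets := fun _ => Aᶜ)
      fun _ _ => hA.compl
    simp only [Finset.mem_univ, iInter_true, preimage_compl] at h
    rw [compl_iUnion, h, Finset.prod_congr rfl fun i _ => by
      rw [prob_compl_eq_one_sub (hmeas i hA), hq i], Finset.prod_const, Finset.card_univ]
  rw [← ENNReal.sub_sub_cancel ENNReal.one_ne_top prob_le_one,
    ← prob_compl_eq_one_sub (MeasurableSet.iUnion fun i => hmeas i hA), hcompl]

namespace Real

theorem le_cos_arccos {y : ℝ} (hy : y ≤ 1) : y ≤ cos (arccos y) := by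
  rcases le_or_gt (-1) y with h | h
  · rw [cos_arccos h hy]
  · rw [arccos_eq_pi.2 h.le, cos_pi]
    exact h.le

theorem le_cos_iff_abs_le_arccos {y θ : ℝ} (hy : y ≤ 1) (hθ : θ ∈ Icc (-π) π) :
    y ≤ cos θ ↔ |θ| ≤ arccos y := by
  have harccos : arccos (cos |θ|) = |θ| := arccos_cos (abs_nonneg θ) (abs_le.2 hθ)
  rw [← cos_abs]
  exact ⟨fun h => harccos ▸ arccos_le_arccos h, fun h => (le_cos_arccos hy).trans
    (cos_le_cos_of_nonneg_of_le_pi (abs_nonneg θ) (arccos_le_pi y) h)⟩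

theorem setOf_le_cos_inter_Icc {y : ℝ} (hy : y ≤ 1) :
    {θ | y ≤ cos θ} ∩ Icc (-π) π = Icc (-arccos y) (arccos y) := by
  ext θ
  constructor
  · rintro ⟨h, hθ⟩
    exact abs_le.1 ((le_cos_iff_abs_le_arccos hy hθ).1 h)
  · intro hθ
    have hθπ : θ ∈ Icc (-π) π :=
      Icc_subset_Icc (neg_le_neg (arccos_le_pi y)) (arccos_le_pi y) hθ
    exact ⟨(le_cos_iff_abs_le_arccos hy hθπ).2 (abs_le.2 hθ), hθπ⟩

theorem uniform_Icc_neg_pi_pi_setOf_le_cos {y : ℝ} (hy : y ≤ 1) :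
    ((ENNReal.ofReal (2 * π))⁻¹ • volume.restrict (Icc (-π) π)) {θ | y ≤ cos θ} =
      ENNReal.ofReal (arccos y / π) := by
  rw [Measure.smul_apply, Measure.restrict_apply (measurableSet_le measurable_const measurable_cos),
    setOf_le_cos_inter_Icc hy, volume_Icc, smul_eq_mul, ← ENNReal.div_eq_inv_mul,
    ← ENNReal.ofReal_div_of_pos (by positivity)]
  congr 1
  field_simp
  ring

end Real

noncomputable def slantRange (r_e r_s θ : ℝ) : ℝ := √(r_e ^ 2 + r_s ^ 2 - 2 * r_e * r_s * cos θ)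

theorem sub_le_slantRange {r_e r_s : ℝ} (h : 0 ≤ r_e * r_s) (θ : ℝ) :
    r_s - r_e ≤ slantRange r_e r_s θ :=
  calc r_s - r_e ≤ |r_s - r_e| := le_abs_self _
    _ = √((r_s - r_e) ^ 2) := (sqrt_sq_eq_abs _).symm
    _ ≤ slantRange r_e r_s θ := sqrt_le_sqrt (by nlinarith [cos_le_one θ])

theorem slantRange_le_iff {r_e r_s x θ : ℝ} (hre : 0 < r_e) (hrs : 0 < r_s) (hx : 0 ≤ x) :
    slantRange r_e r_s θ ≤ x ↔ 1 - (x ^ 2 - (r_s - r_e) ^ 2) / (2 * r_e * r_s) ≤ cos θ := by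
  have h : 0 < 2 * r_e * r_s := by positivity
  rw [slantRange, sqrt_le_left hx, sub_le_comm (a := 1), le_div_iff₀ h]
  constructor <;> intro <;> linarith

theorem stmt1_general {Ω : Type*} [MeasurableSpace Ω] (P : Measure Ω) [IsProbabilityMeasure P]
    (r_e r_s a_s d_max : ℝ) (hre : 0 < r_e) (hrs : r_e < r_s)
    (has : a_s = r_s - r_e)
    (N : ℕ) (hN : 0 < N)
    (Θ : Fin N → Ω → ℝ) (hmeas : ∀ k, Measurable (Θ k))
    (hindep : iIndepFun Θ P)
    (hunif : ∀ k, P.map (Θ k) = (ENNReal.ofReal (2 * π))⁻¹ • volume.restrict (Icc (-π) π))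
    (D : Fin N → Ω → ℝ)
    (hD : ∀ k ω, D k ω = Real.sqrt (r_e ^ 2 + r_s ^ 2 - 2 * r_e * r_s * Real.cos (Θ k ω))) :
    (∀ x, a_s ≤ x → x ≤ d_max →
      P {ω | (⨅ k, D k ω) ≤ x} =
        ENNReal.ofReal
          (1 - (1 - (1 / π) * Real.arccos (1 - (x ^ 2 - a_s ^ 2) / (2 * r_e * r_s))) ^ N)) ∧
    (∀ x, x < a_s → P {ω | (⨅ k, D k ω) ≤ x} = 0) := by
  have hrs₀ : 0 < r_s := hre.trans hrs
  have : Nonempty (Fin N) := Fin.pos_iff_nonempty.mp hN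
  change ∀ k ω, D k ω = slantRange r_e r_s (Θ k ω) at hD
  subst has
  refine ⟨fun x hx _ => ?_, fun x hx => ?_⟩
  · set y := 1 - (x ^ 2 - (r_s - r_e) ^ 2) / (2 * r_e * r_s)
    have hy : y ≤ 1 := sub_le_self _ (div_nonneg (by nlinarith) (by positivity))
    have hA : MeasurableSet {θ | y ≤ cos θ} := measurableSet_le measurable_const measurable_cos
    have hset : {ω | (⨅ k, D k ω) ≤ x} = ⋃ k, Θ k ⁻¹' {θ | y ≤ cos θ} := by
      ext ω
      simp only [mem_ofPred_eq, mem_iUnion, mem_preimage, ciInf_le_iff_exists_le, hD,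
        slantRange_le_iff hre hrs₀ (by linarith : 0 ≤ x)]
      rfl
    have hp : ∀ k, P (Θ k ⁻¹' {θ | y ≤ cos θ}) = ENNReal.ofReal (arccos y / π) := fun k => by
      rw [← Measure.map_apply (hmeas k) hA, hunif k, uniform_Icc_neg_pi_pi_setOf_le_cos hy]
    rw [hset, hindep.measure_iUnion_preimage hmeas hA hp, Fintype.card_fin,
      ENNReal.one_sub_one_sub_ofReal_pow (div_nonneg (arccos_nonneg y) pi_pos.le)
        ((div_le_one pi_pos).2 (arccos_le_pi y)), one_div_mul_eq_div]
  · convert measure_empty (μ := P)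
    refine eq_empty_of_forall_notMem fun ω hω => hx.not_ge ((le_ciInf fun k => ?_).trans hω)
    rw [hD]
    exact sub_le_slantRange (by positivity) _

/-- Contact distance distribution of the S-U link for a binomial point process
of N satellites on the orbit circle. -/
theorem stmt1 {Ω : Type*} [MeasurableSpace Ω] (P : Measure Ω) [IsProbabilityMeasure P]
    (r_e r_s a_s d_max : ℝ) (hre : 0 < r_e) (hrs : r_e < r_s)
    (has : a_s = r_s - r_e) (hdmax : d_max = Real.sqrt (r_s ^ 2 - r_e ^ 2))
    (N : ℕ) (hN : 0 < N)
    (Θ : Fin N → Ω → ℝ) (hmeas : ∀ k, Measurable (Θ k))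
    (hindep : iIndepFun Θ P)
    (hunif : ∀ k, P.map (Θ k) = (ENNReal.ofReal (2 * π))⁻¹ • volume.restrict (Icc (-π) π))
    (D : Fin N → Ω → ℝ)
    (hD : ∀ k ω, D k ω = Real.sqrt (r_e ^ 2 + r_s ^ 2 - 2 * r_e * r_s * Real.cos (Θ k ω))) :
    (∀ x, a_s ≤ x → x ≤ d_max →
      P {ω | (⨅ k, D k ω) ≤ x} =
        ENNReal.ofReal
          (1 - (1 - (1 / π) * Real.arccos (1 - (x ^ 2 - a_s ^ 2) / (2 * r_e * r_s))) ^ N)) ∧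
    (∀ x, x < a_s → P {ω | (⨅ k, D k ω) ≤ x} = 0) :=
  stmt1_general P r_e r_s a_s d_max hre hrs has N hN Θ hmeas hindep hunif D hD
end

section
/- Let a > 0, β > 0, and set μ = (Γ(a+1))^{−1/a}, where Γ is the Gamma function. Define F(t) = (1/Γ(a)) · ∫_0^{t/β} s^{a−1} e^{−s} ds for t > 0 (the CDF of a Gamma random variable with shape a and scale β). Then for every t > 0: if a ≤ 1 then F(t) ≤ (1 − e^{−μ t / β})^a, and if a > 1 then F(t) > (1 − e^{−μ t / β})^a. -/
/-!
Write `ψ x = P(a, x) - (1 - exp (-μ x)) ^ a`, with `P` the regularized lower incomplete Gamma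
function, so that `ψ 0 = 0` and `ψ x → 0` as `x → ∞`. Both terms of `ψ'` are positive, and
comparing their logarithms with the help of `μ ^ a Γ(a + 1) = 1` shows that `ψ' x` has the sign
of `g x = μ - 1 + (a - 1) ℓ(μ x) / x`, where `ℓ y = log (y / (1 - exp (-y)))`. Because
`y < 2 sinh (y / 2)`, `ℓ` is strictly concave on `[0, ∞)` with `ℓ 0 = 0`, so `ℓ y / y` is
strictly decreasing. For `a > 1` the sign function `g` is therefore strictly decreasing: `ψ`
increases and then (possibly) decreases, and with its boundary values `0` it stays positive.
For `a < 1` all signs flip, and for `a = 1` we have `μ = 1` and `ψ = 0`.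
-/

open Real Set Filter Topology MeasureTheory

theorem pos_of_sign_deriv_eq_sign_of_strictAntiOn {ψ ψ' g : ℝ → ℝ} (hψ0 : ψ 0 = 0)
    (hcont : ContinuousOn ψ (Ici 0)) (hderiv : ∀ x, 0 < x → HasDerivAt ψ (ψ' x) x)
    (hlim : Tendsto ψ atTop (𝓝 0)) (hg : StrictAntiOn g (Ioi 0))
    (hsign : ∀ x, 0 < x → SignType.sign (ψ' x) = SignType.sign (g x)) {x : ℝ} (hx : 0 < x) :
    0 < ψ x := by
  by_cases hgx : 0 < g x
  · have hmono : StrictMonoOn ψ (Icc 0 x) := by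
      refine strictMonoOn_of_deriv_pos (convex_Icc 0 x) (hcont.mono Icc_subset_Ici_self)
        fun y hy => ?_
      rw [interior_Icc] at hy
      rw [(hderiv y hy.1).deriv, ← sign_eq_one_iff, hsign y hy.1, sign_eq_one_iff]
      exact hgx.trans (hg hy.1 hx hy.2)
    simpa [hψ0] using hmono (left_mem_Icc.2 hx.le) (right_mem_Icc.2 hx.le) hx
  · have hanti : StrictAntiOn ψ (Ici x) := by
      refine strictAntiOn_of_deriv_neg (convex_Ici x)
        (hcont.mono (Ici_subset_Ici.2 hx.le)) fun y hy => ?_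
      rw [interior_Ici] at hy
      have hy0 : 0 < y := hx.trans hy
      rw [(hderiv y hy0).deriv, ← sign_eq_neg_one_iff, hsign y hy0, sign_eq_neg_one_iff]
      exact (hg hx hy0 hy).trans_le (not_lt.1 hgx)
    have hnonneg : 0 ≤ ψ (x + 1) :=
      le_of_tendsto hlim ((eventually_ge_atTop (x + 1)).mono fun y hy =>
        hanti.antitoneOn (mem_Ici.2 (by linarith)) (mem_Ici.2 (by linarith)) hy)
    exact hnonneg.trans_lt (hanti self_mem_Ici (mem_Ici.2 (by linarith)) (lt_add_one x))

/-- `log (y / (1 - exp (-y)))`; at `y = 0` the junk value `log 0 = 0` of both logarithms gives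
`0`, which is also the limit at `0⁺`. -/
noncomputable def logDivOneSubExpNeg (y : ℝ) : ℝ := log y - log (1 - exp (-y))

theorem one_sub_exp_neg_pos {y : ℝ} (hy : 0 < y) : 0 < 1 - exp (-y) := by
  simpa using exp_lt_one_iff.2 (neg_lt_zero.2 hy)

theorem hasDerivAt_one_sub_exp_neg (y : ℝ) : HasDerivAt (fun y => 1 - exp (-y)) (exp (-y)) y := by
  simpa using ((hasDerivAt_neg y).exp).const_sub 1

theorem tendsto_one_sub_exp_neg_div :
    Tendsto (fun y => (1 - exp (-y)) / y) (𝓝[>] 0) (𝓝 1) := by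
  simpa [div_eq_inv_mul] using (hasDerivAt_one_sub_exp_neg 0).tendsto_slope_zero_right

theorem logDivOneSubExpNeg_zero : logDivOneSubExpNeg 0 = 0 := by
  simp [logDivOneSubExpNeg]

theorem continuousWithinAt_logDivOneSubExpNeg_zero :
    ContinuousWithinAt logDivOneSubExpNeg (Ici 0) 0 := by
  rw [← continuousWithinAt_Ioi_iff_Ici, ContinuousWithinAt, logDivOneSubExpNeg_zero]
  have h := ((continuousAt_log one_ne_zero).tendsto.comp tendsto_one_sub_exp_neg_div).neg
  rw [log_one, neg_zero] at h
  refine h.congr' (eventually_nhdsWithin_of_forall fun y (hy : 0 < y) => ?_)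
  simp [logDivOneSubExpNeg, log_div (one_sub_exp_neg_pos hy).ne' hy.ne']

theorem hasDerivAt_logDivOneSubExpNeg {y : ℝ} (hy : 0 < y) :
    HasDerivAt logDivOneSubExpNeg (y⁻¹ - (exp y - 1)⁻¹) y := by
  have h := (hasDerivAt_log hy.ne').sub
    ((hasDerivAt_one_sub_exp_neg y).log (one_sub_exp_neg_pos hy).ne')
  refine h.congr_deriv ?_
  have : exp y - 1 ≠ 0 := (sub_pos.2 (one_lt_exp_iff.2 hy)).ne'
  rw [exp_neg]
  field_simp

theorem hasDerivAt_inv_sub_inv_exp_sub_one {y : ℝ} (hy : 0 < y) :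
    HasDerivAt (fun y => y⁻¹ - (exp y - 1)⁻¹) (-(y ^ 2)⁻¹ + exp y / (exp y - 1) ^ 2) y := by
  have : exp y - 1 ≠ 0 := (sub_pos.2 (one_lt_exp_iff.2 hy)).ne'
  refine ((hasDerivAt_inv hy.ne').sub (((hasDerivAt_exp y).sub_const 1).inv this)).congr_deriv ?_
  ring

theorem sq_mul_exp_lt_sq_exp_sub_one {y : ℝ} (hy : 0 < y) : y ^ 2 * exp y < (exp y - 1) ^ 2 := by
  have hsinh : y / 2 < sinh (y / 2) := self_lt_sinh_iff.2 (by positivity)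
  have key : y * exp (y / 2) < exp y - 1 := by
    have h : exp y - 1 = 2 * sinh (y / 2) * exp (y / 2) := by
      rw [sinh_eq, mul_div_cancel₀ _ two_ne_zero, sub_mul, ← exp_add, ← exp_add]
      norm_num
    rw [h]
    gcongr
    linarith
  calc y ^ 2 * exp y = (y * exp (y / 2)) ^ 2 := by rw [mul_pow, ← exp_nat_mul]; push_cast; ring_nf
    _ < (exp y - 1) ^ 2 := by gcongr

theorem strictAntiOn_inv_sub_inv_exp_sub_one :
    StrictAntiOn (fun y => y⁻¹ - (exp y - 1)⁻¹) (Ioi 0) := by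
  refine strictAntiOn_of_deriv_neg (convex_Ioi 0)
    (fun y hy => (hasDerivAt_inv_sub_inv_exp_sub_one hy).continuousAt.continuousWithinAt)
    fun y hy => ?_
  rw [interior_Ioi] at hy
  have hy : 0 < y := hy
  have hexp : 0 < exp y - 1 := sub_pos.2 (one_lt_exp_iff.2 hy)
  rw [(hasDerivAt_inv_sub_inv_exp_sub_one hy).deriv, neg_add_lt_iff_lt_add, add_zero,
    div_lt_iff₀ (by positivity), inv_mul_eq_div, lt_div_iff₀ (by positivity), mul_comm]
  exact sq_mul_exp_lt_sq_exp_sub_one hy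

theorem strictConcaveOn_logDivOneSubExpNeg : StrictConcaveOn ℝ (Ici 0) logDivOneSubExpNeg := by
  refine StrictAntiOn.strictConcaveOn_of_deriv (convex_Ici 0) (fun y hy => ?_) ?_
  · rcases (mem_Ici.1 hy).eq_or_lt with rfl | hy
    · exact continuousWithinAt_logDivOneSubExpNeg_zero
    · exact (hasDerivAt_logDivOneSubExpNeg hy).continuousAt.continuousWithinAt
  · rw [interior_Ici]
    refine strictAntiOn_inv_sub_inv_exp_sub_one.congr fun y (hy : 0 < y) => ?_
    exact (hasDerivAt_logDivOneSubExpNeg hy).deriv.symm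

theorem strictAntiOn_logDivOneSubExpNeg_div :
    StrictAntiOn (fun y => logDivOneSubExpNeg y / y) (Ioi 0) := by
  intro x (hx : 0 < x) y (hy : 0 < y) hxy
  simpa [logDivOneSubExpNeg_zero] using strictConcaveOn_logDivOneSubExpNeg.secant_strict_mono
    self_mem_Ici hx.le hy.le hx.ne' hy.ne' hxy

noncomputable def regularizedLowerGamma (a x : ℝ) : ℝ :=
  1 / Gamma a * ∫ s in (0 : ℝ)..x, s ^ (a - 1) * exp (-s)

section
variable {a : ℝ}

theorem integrableOn_Ioi_rpow_mul_exp_neg (ha : 0 < a) :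
    IntegrableOn (fun s => s ^ (a - 1) * exp (-s)) (Ioi 0) := by
  simpa only [mul_comm] using GammaIntegral_convergent ha

theorem intervalIntegrable_rpow_mul_exp_neg (ha : 0 < a) {x : ℝ} (hx : 0 ≤ x) :
    IntervalIntegrable (fun s => s ^ (a - 1) * exp (-s)) volume 0 x :=
  (intervalIntegrable_iff_integrableOn_Ioc_of_le hx).2
    ((integrableOn_Ioi_rpow_mul_exp_neg ha).mono_set Ioc_subset_Ioi_self)

theorem regularizedLowerGamma_zero (a : ℝ) : regularizedLowerGamma a 0 = 0 := by
  simp [regularizedLowerGamma]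

theorem continuousOn_regularizedLowerGamma (ha : 0 < a) :
    ContinuousOn (regularizedLowerGamma a) (Ici 0) := by
  intro x (hx : 0 ≤ x)
  have hprim := intervalIntegral.continuousOn_primitive_interval'
    (intervalIntegrable_rpow_mul_exp_neg ha (by linarith : (0 : ℝ) ≤ x + 1)) left_mem_uIcc
  rw [uIcc_of_le (by linarith), ← Ici_inter_Iic] at hprim
  exact (continuousWithinAt_inter (Iic_mem_nhds (lt_add_one x))).1
    ((hprim x ⟨hx, by simp⟩).const_mul _)

theorem hasDerivAt_regularizedLowerGamma (ha : 0 < a) {x : ℝ} (hx : 0 < x) :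
    HasDerivAt (regularizedLowerGamma a) (1 / Gamma a * (x ^ (a - 1) * exp (-x))) x := by
  refine (intervalIntegral.integral_hasDerivAt_right
    (intervalIntegrable_rpow_mul_exp_neg ha hx.le) ?_ ?_).const_mul _
  · exact ((measurable_id.pow_const _).mul (by fun_prop)).stronglyMeasurable
      |>.stronglyMeasurableAtFilter
  · exact (continuousAt_rpow_const _ _ (Or.inl hx.ne')).mul (by fun_prop)

theorem tendsto_regularizedLowerGamma_atTop (ha : 0 < a) :
    Tendsto (regularizedLowerGamma a) atTop (𝓝 1) := by
  have h := intervalIntegral_tendsto_integral_Ioi 0 (integrableOn_Ioi_rpow_mul_exp_neg ha)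
    tendsto_id
  have hΓ : ∫ s in Ioi (0 : ℝ), s ^ (a - 1) * exp (-s) = Gamma a := by
    simp only [Gamma_eq_integral ha, mul_comm]
  rw [hΓ] at h
  unfold regularizedLowerGamma
  simpa [(Gamma_pos_of_pos ha).ne'] using h.const_mul (1 / Gamma a)
end

noncomputable def cdfGap (a μ x : ℝ) : ℝ := regularizedLowerGamma a x - (1 - exp (-(μ * x))) ^ a

noncomputable def cdfGapDeriv (a μ x : ℝ) : ℝ :=
  1 / Gamma a * (x ^ (a - 1) * exp (-x)) - μ * exp (-(μ * x)) * a * (1 - exp (-(μ * x))) ^ (a - 1)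

section
variable {a μ : ℝ}

theorem cdfGap_zero (ha : 0 < a) : cdfGap a μ 0 = 0 := by
  simp [cdfGap, regularizedLowerGamma_zero, zero_rpow ha.ne']

theorem continuousOn_cdfGap (ha : 0 < a) : ContinuousOn (cdfGap a μ) (Ici 0) :=
  (continuousOn_regularizedLowerGamma ha).sub
    ((Continuous.rpow_const (by fun_prop) fun _ => Or.inr ha.le).continuousOn)

theorem hasDerivAt_cdfGap (ha : 0 < a) (hμ : 0 < μ) {x : ℝ} (hx : 0 < x) :
    HasDerivAt (cdfGap a μ) (cdfGapDeriv a μ x) x := by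
  have hbase : HasDerivAt (fun x => 1 - exp (-(μ * x))) (μ * exp (-(μ * x))) x := by
    have h := (hasDerivAt_one_sub_exp_neg (μ * x)).comp x ((hasDerivAt_id' x).const_mul μ)
    rw [mul_one, mul_comm] at h
    exact h
  exact (hasDerivAt_regularizedLowerGamma ha hx).sub
    (hbase.rpow_const (Or.inl (one_sub_exp_neg_pos (mul_pos hμ hx)).ne'))

theorem tendsto_cdfGap_atTop (ha : 0 < a) (hμ : 0 < μ) : Tendsto (cdfGap a μ) atTop (𝓝 0) := by
  unfold cdfGap
  have hexp : Tendsto (fun x => exp (-(μ * x))) atTop (𝓝 0) :=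
    tendsto_exp_neg_atTop_nhds_zero.comp (tendsto_id.const_mul_atTop hμ)
  have hbound : Tendsto (fun x => (1 - exp (-(μ * x))) ^ a) atTop (𝓝 1) := by
    simpa using (hexp.const_sub 1).rpow_const (p := a) (Or.inl (by norm_num))
  simpa using (tendsto_regularizedLowerGamma_atTop ha).sub hbound
end

theorem sign_sub_eq_sign_log_sub_log {A B : ℝ} (hA : 0 < A) (hB : 0 < B) :
    SignType.sign (A - B) = SignType.sign (log A - log B) := by
  rcases lt_trichotomy A B with h | rfl | h
  · rw [sign_neg (sub_neg.2 h), sign_neg (sub_neg.2 (log_lt_log hA h))]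
  · simp
  · rw [sign_pos (sub_pos.2 h), sign_pos (sub_pos.2 (log_lt_log hB h))]

theorem strictAntiOn_logDivOneSubExpNeg_mul_div {μ : ℝ} (hμ : 0 < μ) :
    StrictAntiOn (fun x => logDivOneSubExpNeg (μ * x) / x) (Ioi 0) := by
  intro x (hx : 0 < x) y (hy : 0 < y) hxy
  have h := strictAntiOn_logDivOneSubExpNeg_div (mul_pos hμ hx) (mul_pos hμ hy)
    (mul_lt_mul_of_pos_left hxy hμ)
  simp only [div_mul_eq_div_div_swap] at h
  exact (div_lt_div_iff_of_pos_right hμ).1 h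

noncomputable def cdfGapDerivSign (a μ x : ℝ) : ℝ :=
  μ - 1 + (a - 1) * (logDivOneSubExpNeg (μ * x) / x)

section
variable {a μ : ℝ}

theorem sign_cdfGapDeriv (ha : 0 < a) (hμ : 0 < μ) (hμa : log (Gamma (a + 1)) = -a * log μ)
    {x : ℝ} (hx : 0 < x) :
    SignType.sign (cdfGapDeriv a μ x) = SignType.sign (cdfGapDerivSign a μ x) := by
  have hΓ : 0 < Gamma a := Gamma_pos_of_pos ha
  have hE : 0 < 1 - exp (-(μ * x)) := one_sub_exp_neg_pos (mul_pos hμ hx)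
  have hlog : log (1 / Gamma a * (x ^ (a - 1) * exp (-x)))
      - log (μ * exp (-(μ * x)) * a * (1 - exp (-(μ * x))) ^ (a - 1))
      = x * cdfGapDerivSign a μ x := by
    rw [Gamma_add_one ha.ne', log_mul ha.ne' hΓ.ne'] at hμa
    rw [log_mul (by positivity) (by positivity), log_mul (by positivity) (by positivity),
      log_mul (by positivity) (by positivity), log_mul (by positivity) (by positivity),
      log_mul hμ.ne' (by positivity), log_rpow hx, log_rpow hE, log_exp, log_exp, one_div,
      log_inv, cdfGapDerivSign, logDivOneSubExpNeg, log_mul hμ.ne' hx.ne']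
    field_simp
    linear_combination -hμa
  rw [cdfGapDeriv, sign_sub_eq_sign_log_sub_log (by positivity) (by positivity), hlog,
    sign_mul, sign_pos hx, one_mul]

theorem strictAntiOn_cdfGapDerivSign (ha : 1 < a) (hμ : 0 < μ) :
    StrictAntiOn (cdfGapDerivSign a μ) (Ioi 0) := fun _ hx _ hy hxy =>
  add_lt_add_right (mul_lt_mul_of_pos_left
    (strictAntiOn_logDivOneSubExpNeg_mul_div hμ hx hy hxy) (sub_pos.2 ha)) _

theorem strictMonoOn_cdfGapDerivSign (ha : a < 1) (hμ : 0 < μ) :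
    StrictMonoOn (cdfGapDerivSign a μ) (Ioi 0) := fun _ hx _ hy hxy =>
  add_lt_add_right (mul_lt_mul_of_neg_left
    (strictAntiOn_logDivOneSubExpNeg_mul_div hμ hx hy hxy) (sub_neg.2 ha)) _

theorem cdfGap_pos (ha : 1 < a) (hμ : 0 < μ) (hμa : log (Gamma (a + 1)) = -a * log μ)
    {x : ℝ} (hx : 0 < x) : 0 < cdfGap a μ x := by
  have ha0 : 0 < a := one_pos.trans ha
  exact pos_of_sign_deriv_eq_sign_of_strictAntiOn (cdfGap_zero ha0) (continuousOn_cdfGap ha0)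
    (fun y hy => hasDerivAt_cdfGap ha0 hμ hy) (tendsto_cdfGap_atTop ha0 hμ)
    (strictAntiOn_cdfGapDerivSign ha hμ) (fun y hy => sign_cdfGapDeriv ha0 hμ hμa hy) hx

theorem cdfGap_neg (ha0 : 0 < a) (ha : a < 1) (hμ : 0 < μ)
    (hμa : log (Gamma (a + 1)) = -a * log μ) {x : ℝ} (hx : 0 < x) : cdfGap a μ x < 0 := by
  have h := pos_of_sign_deriv_eq_sign_of_strictAntiOn (ψ := -cdfGap a μ)
    (by simp [cdfGap_zero ha0]) (continuousOn_cdfGap ha0).neg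
    (fun y hy => (hasDerivAt_cdfGap ha0 hμ hy).neg)
    (neg_zero (G := ℝ) ▸ (tendsto_cdfGap_atTop ha0 hμ).neg)
    (strictMonoOn_cdfGapDerivSign ha hμ).neg
    (fun y hy => by simp only [Left.sign_neg, sign_cdfGapDeriv ha0 hμ hμa hy]) hx
  simpa using h

theorem cdfGap_one (x : ℝ) : cdfGap 1 1 x = 0 := by
  simp [cdfGap, regularizedLowerGamma, intervalIntegral.integral_comp_neg fun s => exp s]
end

/-- Tight bound on the CDF of a Gamma random variable with shape `a` and
scale `β`, with μ = Γ(a+1)^(−1/a). -/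
theorem stmt6 (a β μ : ℝ) (ha : 0 < a) (hβ : 0 < β)
    (hμ : μ = Real.Gamma (a + 1) ^ (-1 / a))
    (F : ℝ → ℝ)
    (hF : ∀ t, 0 < t →
      F t = (1 / Real.Gamma a) * ∫ s in (0:ℝ)..(t / β), s ^ (a - 1) * Real.exp (-s)) :
    ∀ t, 0 < t →
      (a ≤ 1 → F t ≤ (1 - Real.exp (-(μ * t) / β)) ^ a) ∧
      (1 < a → (1 - Real.exp (-(μ * t) / β)) ^ a < F t) := by
  have hΓ : 0 < Gamma (a + 1) := Gamma_pos_of_pos (by linarith)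
  have hμpos : 0 < μ := hμ ▸ rpow_pos_of_pos hΓ _
  have hμa : log (Gamma (a + 1)) = -a * log μ := by
    rw [hμ, log_rpow hΓ]
    field_simp
  intro t ht
  have hx : 0 < t / β := div_pos ht hβ
  have hgap : F t - (1 - exp (-(μ * t) / β)) ^ a = cdfGap a μ (t / β) := by
    rw [hF t ht, cdfGap, regularizedLowerGamma, neg_div, mul_div_assoc]
  refine ⟨fun ha1 => ?_, fun ha1 => ?_⟩
  · rcases ha1.lt_or_eq with ha1 | rfl
    · linarith [cdfGap_neg ha ha1 hμpos hμa hx]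
    · have hμ1 : μ = 1 := by norm_num [hμ]
      subst hμ1
      linarith [cdfGap_one (t / β)]
  · linarith [cdfGap_pos ha1 hμpos hμa hx]
end

section
/- Let 0 < r_e < r_s, a_s = r_s − r_e, d_max = √(r_s² − r_e²), and let N be a positive integer. Let D be a random variable with probability density f_N(x) = (N x)/(π r_e r_s · √(1 − (1 − (x² − a_s²)/(2 r_e r_s))²)) · [1 − (1/π)·arccos(1 − (x² − a_s²)/(2 r_e r_s))]^{N−1} for a_s ≤ x < d_max and f_N(x) = 0 otherwise. Let α_s be a positive integer, β_s > 0, μ > 0, and let H be a random variable independent of D with P(H ≤ t) = (1 − e^{−μ t / β_s})^{α_s} for t ≥ 0. Then for every A > 0: P(H > A·D²) = (N/(π r_e r_s)) · ∫_{a_s}^{d_max} [ Σ_{j=1}^{α_s} C(α_s, j) (−1)^{j+1} exp(−j μ A x² / β_s) ] · x/√(1 − (1 − (x² − a_s²)/(2 r_e r_s))²) · [1 − (1/π)·arccos(1 − (x² − a_s²)/(2 r_e r_s))]^{N−1} dx. -/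
/-!
Conditioning on `D = x` and using independence, the coverage probability is the integral of the
survival function `1 - (1 - e^{-μ A x² / β_s})^{α_s}` of `H` against the law of `D`. Expanding the
power by the binomial theorem gives the stated sum of exponentials, and the density of `D`
restricts the integral to `[a_s, d_max)`, which differs from `(a_s, d_max]` by a null set.
-/

open MeasureTheory ProbabilityTheory Real Set

theorem one_sub_one_sub_pow_eq_sum {R : Type*} [CommRing R] (n : ℕ) (u : R) :
    1 - (1 - u) ^ n = ∑ j ∈ Finset.Icc 1 n, (n.choose j : R) * (-1) ^ (j + 1) * u ^ j := by
  have hrange : Finset.range (n + 1) = insert 0 (Finset.Icc 1 n) := by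
    ext j
    simp only [Finset.mem_range, Finset.mem_insert, Finset.mem_Icc]
    omega
  rw [show (1 : R) - u = -u + 1 by ring, add_pow, hrange, Finset.sum_insert (by simp),
    sub_add_eq_sub_sub, pow_zero, one_pow, one_mul, one_mul, Nat.choose_zero_right, Nat.cast_one,
    sub_self, zero_sub, ← Finset.sum_neg_distrib]
  refine Finset.sum_congr rfl fun j _ => ?_
  rw [neg_pow, pow_succ]
  ring

theorem integral_ite_Ico_eq_setIntegral_Ioc {μ : Measure ℝ} [NullSingletonClass μ] (a b : ℝ)
    (h : ℝ → ℝ) :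
    ∫ x, (if a ≤ x ∧ x < b then h x else 0) ∂μ = ∫ x in Ioc a b, h x ∂μ := by
  rw [← setIntegral_congr_set Ico_ae_eq_Ioc, ← integral_indicator measurableSet_Ico]
  simp only [indicator_apply, mem_Ico]

theorem integral_withDensity_ofReal_eq_integral_mul {X : Type*} [MeasurableSpace X]
    {μ : Measure X} {f : X → ℝ} (hf : Measurable f) (hf_nonneg : ∀ x, 0 ≤ f x) (g : X → ℝ) :
    ∫ x, g x ∂μ.withDensity (fun x => ENNReal.ofReal (f x)) = ∫ x, f x * g x ∂μ := by
  rw [integral_withDensity_eq_integral_toReal_smul hf.ennreal_ofReal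
    (ae_of_all _ fun _ => ENNReal.ofReal_lt_top)]
  simp only [ENNReal.toReal_ofReal (hf_nonneg _), smul_eq_mul]

section Probability

variable {Ω : Type*} [MeasurableSpace Ω] {P : Measure Ω}

theorem measure_lt_eq_lintegral_map_of_indepFun [IsFiniteMeasure P] {α : Type*}
    [MeasurableSpace α] {X : Ω → α} {Y : Ω → ℝ} (hX : Measurable X) (hY : Measurable Y)
    (hXY : IndepFun X Y P) {φ : α → ℝ} (hφ : Measurable φ) :
    P {ω | φ (X ω) < Y ω} = ∫⁻ x, P {ω | φ x < Y ω} ∂(P.map X) := by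
  have hs : MeasurableSet {p : α × ℝ | φ p.1 < p.2} :=
    measurableSet_lt (hφ.comp measurable_fst) measurable_snd
  have hmap : P.map (fun ω => (X ω, Y ω)) = (P.map X).prod (P.map Y) :=
    (indepFun_iff_map_prod_eq_prod_map_map hX.aemeasurable hY.aemeasurable).mp hXY
  rw [show {ω | φ (X ω) < Y ω} = (fun ω => (X ω, Y ω)) ⁻¹' {p | φ p.1 < p.2} from rfl,
    ← Measure.map_apply (hX.prodMk hY) hs, hmap, Measure.prod_apply hs]
  exact lintegral_congr fun x => Measure.map_apply hY (measurableSet_Ioi (a := φ x))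

theorem measure_lt_eq_ofReal_one_sub [IsProbabilityMeasure P] {Y : Ω → ℝ} (hY : Measurable Y)
    {t c : ℝ} (hc : 0 ≤ c) (hYt : P {ω | Y ω ≤ t} = ENNReal.ofReal c) :
    P {ω | t < Y ω} = ENNReal.ofReal (1 - c) := by
  have hcompl : {ω | t < Y ω} = {ω | Y ω ≤ t}ᶜ := by
    ext ω
    simp
  rw [hcompl, prob_compl_eq_one_sub (s := {ω | Y ω ≤ t}) (hY measurableSet_Iic), hYt,
    ENNReal.ofReal_sub 1 hc, ENNReal.ofReal_one]

end Probability

section TightGamma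

noncomputable def tightGammaCDF (α : ℕ) (β μ t : ℝ) : ℝ := (1 - exp (-(μ * t) / β)) ^ α

variable {α : ℕ} {β μ t : ℝ}

theorem tightGammaCDF_mem_Icc (hβ : 0 < β) (hμ : 0 < μ) (ht : 0 ≤ t) :
    tightGammaCDF α β μ t ∈ Icc (0 : ℝ) 1 := by
  have h_le : exp (-(μ * t) / β) ≤ 1 := exp_le_one_iff.mpr
    (div_nonpos_of_nonpos_of_nonneg (neg_nonpos.mpr (by positivity)) hβ.le)
  have h_pos : 0 < exp (-(μ * t) / β) := exp_pos _
  exact ⟨pow_nonneg (by linarith) α, pow_le_one₀ (by linarith) (by linarith)⟩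

@[fun_prop]
theorem measurable_tightGammaCDF : Measurable (tightGammaCDF α β μ) := by
  unfold tightGammaCDF
  fun_prop

theorem one_sub_tightGammaCDF_eq_sum :
    1 - tightGammaCDF α β μ t =
      ∑ j ∈ Finset.Icc 1 α, (α.choose j : ℝ) * (-1) ^ (j + 1) * exp (-(j * μ * t) / β) := by
  rw [tightGammaCDF, one_sub_one_sub_pow_eq_sum]
  refine Finset.sum_congr rfl fun j _ => ?_
  rw [← exp_nat_mul]
  ring_nf

end TightGamma

section ContactDistance

noncomputable def contactDistanceDensity (r_e r_s a_s d_max : ℝ) (N : ℕ) (x : ℝ) : ℝ :=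
  if a_s ≤ x ∧ x < d_max then
    (N * x) / (π * r_e * r_s * sqrt (1 - (1 - (x ^ 2 - a_s ^ 2) / (2 * r_e * r_s)) ^ 2)) *
      (1 - (1 / π) * arccos (1 - (x ^ 2 - a_s ^ 2) / (2 * r_e * r_s))) ^ (N - 1)
  else 0

variable {r_e r_s a_s d_max : ℝ} {N : ℕ}

theorem one_sub_inv_pi_mul_arccos_nonneg (y : ℝ) : 0 ≤ 1 - (1 / π) * arccos y := by
  rw [sub_nonneg, one_div, inv_mul_le_one₀ pi_pos]
  exact arccos_le_pi y

theorem contactDistanceDensity_nonneg (hre : 0 ≤ r_e) (hrs : 0 ≤ r_s) (ha : 0 ≤ a_s) (x : ℝ) :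
    0 ≤ contactDistanceDensity r_e r_s a_s d_max N x := by
  rw [contactDistanceDensity]
  split_ifs with hx
  · have hx0 : 0 ≤ x := ha.trans hx.1
    exact mul_nonneg (by positivity) (pow_nonneg (one_sub_inv_pi_mul_arccos_nonneg _) _)
  · exact le_rfl

theorem measurable_contactDistanceDensity :
    Measurable (contactDistanceDensity r_e r_s a_s d_max N) := by
  refine Measurable.ite measurableSet_Ico ?_ measurable_const
  have := continuous_arccos.measurable
  fun_prop

end ContactDistance

theorem stmt9_general {Ω : Type*} [MeasurableSpace Ω] (P : Measure Ω) [IsProbabilityMeasure P]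
    (r_e r_s a_s d_max : ℝ) (hre : 0 < r_e) (hrs : r_e < r_s)
    (has : a_s = r_s - r_e)
    (N : ℕ)
    (f : ℝ → ℝ)
    (hf : ∀ x, f x = if a_s ≤ x ∧ x < d_max then
        (N * x) /
            (π * r_e * r_s *
              Real.sqrt (1 - (1 - (x ^ 2 - a_s ^ 2) / (2 * r_e * r_s)) ^ 2)) *
          (1 - (1 / π) * Real.arccos (1 - (x ^ 2 - a_s ^ 2) / (2 * r_e * r_s))) ^ (N - 1)
      else 0)
    (D H : Ω → ℝ) (hDmeas : Measurable D) (hHmeas : Measurable H)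
    (hDdist : P.map D = volume.withDensity fun x => ENNReal.ofReal (f x))
    (α_s : ℕ) (β_s μ : ℝ) (hβs : 0 < β_s) (hμ : 0 < μ)
    (hH : ∀ t, 0 ≤ t →
      P {ω | H ω ≤ t} = ENNReal.ofReal ((1 - Real.exp (-(μ * t) / β_s)) ^ α_s))
    (hindep : IndepFun D H P)
    (A : ℝ) (hA : 0 < A) :
    P {ω | A * D ω ^ 2 < H ω} =
      ENNReal.ofReal ((N / (π * r_e * r_s)) *
        ∫ x in Ioc a_s d_max,
          (∑ j ∈ Finset.Icc 1 α_s, (α_s.choose j : ℝ) * (-1 : ℝ) ^ (j + 1) *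
              Real.exp (-((j : ℝ) * μ * A * x ^ 2) / β_s)) *
            (x / Real.sqrt (1 - (1 - (x ^ 2 - a_s ^ 2) / (2 * r_e * r_s)) ^ 2)) *
            (1 - (1 / π) * Real.arccos (1 - (x ^ 2 - a_s ^ 2) / (2 * r_e * r_s))) ^ (N - 1)) := by
  obtain rfl : f = contactDistanceDensity r_e r_s a_s d_max N := funext hf
  set g : ℝ → ℝ := fun x => 1 - tightGammaCDF α_s β_s μ (A * x ^ 2)
  have hF_mem (x : ℝ) := tightGammaCDF_mem_Icc (α := α_s) hβs hμ (by positivity : 0 ≤ A * x ^ 2)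
  have hg_mem (x : ℝ) : g x ∈ Icc (0 : ℝ) 1 := by
    obtain ⟨h0, h1⟩ := hF_mem x
    exact ⟨by linarith, by linarith⟩
  have hf_nonneg : ∀ x, 0 ≤ contactDistanceDensity r_e r_s a_s d_max N x :=
    contactDistanceDensity_nonneg hre.le (by linarith) (by linarith)
  calc P {ω | A * D ω ^ 2 < H ω} = ∫⁻ x, ENNReal.ofReal (g x) ∂(P.map D) := by
        rw [measure_lt_eq_lintegral_map_of_indepFun hDmeas hHmeas hindep
          (φ := fun x => A * x ^ 2) (by fun_prop)]
        exact lintegral_congr fun x =>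
          measure_lt_eq_ofReal_one_sub hHmeas (hF_mem x).1 (hH _ (by positivity))
    _ = ENNReal.ofReal (∫ x, g x ∂(P.map D)) := by
        have := Measure.isProbabilityMeasure_map (μ := P) hDmeas.aemeasurable
        refine (ofReal_integral_eq_lintegral_ofReal ?_ (ae_of_all _ fun x => (hg_mem x).1)).symm
        exact Integrable.of_mem_Icc 0 1 (by fun_prop) (ae_of_all _ hg_mem)
    _ = ENNReal.ofReal (∫ x, contactDistanceDensity r_e r_s a_s d_max N x * g x) := by
        rw [hDdist, integral_withDensity_ofReal_eq_integral_mul measurable_contactDistanceDensity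
          hf_nonneg]
    _ = _ := by
        rw [← integral_const_mul, ← integral_ite_Ico_eq_setIntegral_Ioc]
        congr 2 with x
        dsimp only [g]
        rw [contactDistanceDensity, one_sub_tightGammaCDF_eq_sum]
        simp only [← mul_assoc]
        split_ifs
        · ring
        · exact zero_mul _

/-- Downlink coverage probability of the S-U link: D is the contact distance
of the nearest of N satellites (with the stated density), H the fading power with the tight
Gamma-bound CDF, independent of D; then P(H > A·D²) is given by the stated integral. -/
theorem stmt9 {Ω : Type*} [MeasurableSpace Ω] (P : Measure Ω) [IsProbabilityMeasure P]
    (r_e r_s a_s d_max : ℝ) (hre : 0 < r_e) (hrs : r_e < r_s)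
    (has : a_s = r_s - r_e) (hdmax : d_max = Real.sqrt (r_s ^ 2 - r_e ^ 2))
    (N : ℕ) (hN : 0 < N)
    (f : ℝ → ℝ)
    (hf : ∀ x, f x = if a_s ≤ x ∧ x < d_max then
        (N * x) /
            (π * r_e * r_s *
              Real.sqrt (1 - (1 - (x ^ 2 - a_s ^ 2) / (2 * r_e * r_s)) ^ 2)) *
          (1 - (1 / π) * Real.arccos (1 - (x ^ 2 - a_s ^ 2) / (2 * r_e * r_s))) ^ (N - 1)
      else 0)
    (D H : Ω → ℝ) (hDmeas : Measurable D) (hHmeas : Measurable H)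
    (hDdist : P.map D = volume.withDensity fun x => ENNReal.ofReal (f x))
    (α_s : ℕ) (hαs : 0 < α_s) (β_s μ : ℝ) (hβs : 0 < β_s) (hμ : 0 < μ)
    (hH : ∀ t, 0 ≤ t →
      P {ω | H ω ≤ t} = ENNReal.ofReal ((1 - Real.exp (-(μ * t) / β_s)) ^ α_s))
    (hindep : IndepFun D H P)
    (A : ℝ) (hA : 0 < A) :
    P {ω | A * D ω ^ 2 < H ω} =
      ENNReal.ofReal ((N / (π * r_e * r_s)) *
        ∫ x in Ioc a_s d_max,
          (∑ j ∈ Finset.Icc 1 α_s, (α_s.choose j : ℝ) * (-1 : ℝ) ^ (j + 1) *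
              Real.exp (-((j : ℝ) * μ * A * x ^ 2) / β_s)) *
            (x / Real.sqrt (1 - (1 - (x ^ 2 - a_s ^ 2) / (2 * r_e * r_s)) ^ 2)) *
            (1 - (1 / π) * Real.arccos (1 - (x ^ 2 - a_s ^ 2) / (2 * r_e * r_s))) ^ (N - 1)) :=
  stmt9_general P r_e r_s a_s d_max hre hrs has N f hf D H hDmeas hHmeas hDdist α_s β_s μ hβs hμ hH
    hindep A hA
end

section
/- Let 0 < r_e < r_s, a_s = r_s − r_e, d_max = √(r_s² − r_e²), let N_i be a positive integer, λ_c > 0, α > 0, Q_s > 0. Let Θ_1, …, Θ_{N_i} be independent random variables uniform on [−π, π], set D_k = √(r_e² + r_s² − 2 r_e r_s cos Θ_k), and call satellite k visible when D_k ≤ d_max. Let D_c be a random variable independent of (Θ_1, …, Θ_{N_i}) with P(D_c ≤ x) = 1 − exp(−λ_c π x²) for x ≥ 0. Then the probability of the event {for every k with D_k ≤ d_max, D_k > Q_s^{−α/2} D_c^{α/2}} equals ∫_0^{(a_s Q_s^{α/2})^{2/α}} 2π λ_c x e^{−π λ_c x²} dx + 2π λ_c ∫_{(a_s Q_s^{α/2})^{2/α}}^{(d_max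 Q_s^{α/2})^{2/α}} [1 − (1/π)·arccos(1 − (Q_s^{−α} x^{α} − a_s²)/(2 r_e r_s))]^{N_i} · x e^{−π λ_c x²} dx + 2π λ_c ∫_{(d_max Q_s^{α/2})^{2/α}}^{∞} [1 − (1/π)·arccos(r_e/r_s)]^{N_i} · x e^{−π λ_c x²} dx. -/
open MeasureTheory ProbabilityTheory Real Set

/-!
Given `D_c = y`, the satellites are i.i.d., and satellite `k` is invisible or farther than
`τ y = Q_s ^ (-α/2) * y ^ (α/2)` exactly when `min (τ y) d_max < D_k`; by the law of cosines this
is the event `cos Θ_k < u` for an explicit `u`, of probability `1 - arccos u / π` under the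
uniform angle. Integrating the `N_i`-th power of this against the density `2πλ y exp (-πλ y²)` of
`D_c` and splitting the `y`-axis where `τ y` reaches `a_s` (below, every satellite is farther)
and `d_max` (above, only visibility matters) gives the three terms.
-/

lemma measure_forall_mem_eq_lintegral_pow {Ω α β ι : Type*} [MeasurableSpace Ω]
    [MeasurableSpace α] [MeasurableSpace β] [Fintype ι] (P : Measure Ω) [IsProbabilityMeasure P]
    {X : Ω → α} {Θ : ι → Ω → β} (hX : Measurable X) (hΘ : ∀ k, Measurable (Θ k))
    (hΘindep : iIndepFun Θ P) {ν : Measure β} (hΘlaw : ∀ k, P.map (Θ k) = ν)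
    (hindep : IndepFun (fun ω k => Θ k ω) X P) {A : Set (α × β)} (hA : MeasurableSet A) :
    P {ω | ∀ k, (X ω, Θ k ω) ∈ A} =
      ∫⁻ x, ν (Prod.mk x ⁻¹' A) ^ Fintype.card ι ∂P.map X := by
  have (k : ι) : IsProbabilityMeasure (P.map (Θ k)) :=
    Measure.isProbabilityMeasure_map (hΘ k).aemeasurable
  have hΘvec : Measurable fun ω k => Θ k ω := measurable_pi_lambda _ hΘ
  let S : Set (α × (ι → β)) := ⋂ k, (fun z => (z.1, z.2 k)) ⁻¹' A
  have hS : MeasurableSet S := .iInter fun k =>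
    hA.preimage (measurable_fst.prodMk ((measurable_pi_apply k).comp measurable_snd))
  have hlaw : P.map (fun ω => (X ω, fun k => Θ k ω)) =
      (P.map X).prod (Measure.pi fun k => P.map (Θ k)) := by
    rw [(indepFun_iff_map_prod_eq_prod_map_map hX.aemeasurable hΘvec.aemeasurable).mp
        hindep.symm, hΘindep.map_fun_eq_pi_map fun k => (hΘ k).aemeasurable]
  calc P {ω | ∀ k, (X ω, Θ k ω) ∈ A} = P.map (fun ω => (X ω, fun k => Θ k ω)) S := by
        rw [Measure.map_apply (hX.prodMk hΘvec) hS]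
        congr 1
        ext ω
        simp [S]
    _ = ∫⁻ x, ∏ k, P.map (Θ k) (Prod.mk x ⁻¹' A) ∂P.map X := by
        rw [hlaw, Measure.prod_apply hS]
        refine lintegral_congr fun x => ?_
        rw [← Measure.pi_pi]
        congr 1
        ext θ
        simp [S]
    _ = _ := by simp [hΘlaw]

lemma Icc_inter_le_cos_eq_Icc_arccos {u : ℝ} (hu : -1 ≤ u) (hu1 : u ≤ 1) :
    Icc (-π) π ∩ {v | u ≤ cos v} = Icc (-arccos u) (arccos u) := by
  ext v
  simp only [mem_inter_iff, mem_Icc, mem_ofPred_eq, ← abs_le]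
  have hrange : arccos u ∈ Icc 0 π := ⟨arccos_nonneg u, arccos_le_pi u⟩
  constructor
  · rintro ⟨hv, hcos⟩
    rw [← cos_abs, ← cos_arccos hu hu1] at hcos
    exact strictAntiOn_cos.le_iff_ge hrange ⟨abs_nonneg v, hv⟩ |>.mp hcos
  · intro hv
    have hvπ := hv.trans hrange.2
    refine ⟨hvπ, ?_⟩
    rw [← cos_abs, ← cos_arccos hu hu1]
    exact strictAntiOn_cos.le_iff_ge hrange ⟨abs_nonneg v, hvπ⟩ |>.mpr hv

lemma volume_Icc_inter_le_cos {u : ℝ} (hu : -1 ≤ u) :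
    volume (Icc (-π) π ∩ {v | u ≤ cos v}) = ENNReal.ofReal (2 * arccos u) := by
  rcases le_or_gt u 1 with hu1 | hu1
  · rw [Icc_inter_le_cos_eq_Icc_arccos hu hu1, volume_Icc]
    ring_nf
  · have hempty : Icc (-π) π ∩ {v | u ≤ cos v} = ∅ :=
      eq_empty_of_forall_notMem fun v hv => (cos_le_one v).not_gt (hu1.trans_le hv.2)
    rw [hempty, arccos_eq_zero.mpr hu1.le]
    simp

noncomputable def uniformAngle : Measure ℝ :=
  (ENNReal.ofReal (2 * π))⁻¹ • volume.restrict (Icc (-π) π)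

lemma uniformAngle_setOf_cos_lt (u : ℝ) :
    uniformAngle {v | cos v < u} =
      ENNReal.ofReal (1 - 1 / π * arccos u) := by
  rcases lt_or_ge u (-1) with hu | hu
  · have hempty : {v | cos v < u} = ∅ :=
      eq_empty_of_forall_notMem fun v hv => (neg_one_le_cos v).not_gt (hv.trans hu)
    rw [hempty, arccos_of_le_neg_one hu.le, one_div_mul_cancel pi_ne_zero]
    simp
  have hmeas : MeasurableSet {v | u ≤ cos v} :=
    measurableSet_le measurable_const (by fun_prop)
  have hdiff :
      {v | cos v < u} ∩ Icc (-π) π = Icc (-π) π \ (Icc (-π) π ∩ {v | u ≤ cos v}) := by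
    ext v
    simp only [mem_inter_iff, mem_ofPred_eq, mem_sdiff, not_and, not_le]
    tauto
  rw [uniformAngle, Measure.smul_apply,
    Measure.restrict_apply (measurableSet_lt (by fun_prop) measurable_const), hdiff,
    measure_sdiff inter_subset_left (measurableSet_Icc.inter hmeas).nullMeasurableSet
      (measure_ne_top_of_subset inter_subset_left (by simp)), volume_Icc_inter_le_cos hu,
    volume_Icc, ← ENNReal.ofReal_sub _ (by positivity [arccos_nonneg u]),
    ← ENNReal.ofReal_inv_of_pos (by positivity), smul_eq_mul,
    ← ENNReal.ofReal_mul (by positivity)]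
  congr 1
  field_simp
  ring

lemma imp_lt_iff_min_lt {α : Type*} [LinearOrder α] {x d s : α} :
    (x ≤ d → s < x) ↔ min s d < x := by
  rw [min_lt_iff, imp_iff_not_or, not_le, or_comm]

lemma lt_sqrt_law_of_cosines_iff {r₁ r₂ m θ : ℝ} (hr₁ : 0 < r₁) (hr₂ : 0 < r₂)
    (hm : 0 ≤ m) :
    m < √(r₁ ^ 2 + r₂ ^ 2 - 2 * r₁ * r₂ * cos θ) ↔
      cos θ < (r₁ ^ 2 + r₂ ^ 2 - m ^ 2) / (2 * r₁ * r₂) := by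
  rw [lt_sqrt hm, lt_div_iff₀ (by positivity)]
  constructor <;> intro h <;> linarith

/-- The argument of `arccos` is the cosine of the central angle at which the distance between
points at radii `r₁` and `r₂` equals `min s d`. -/
noncomputable def farOrHiddenProb (r₁ r₂ d s : ℝ) : ℝ :=
  1 - 1 / π * arccos ((r₁ ^ 2 + r₂ ^ 2 - min s d ^ 2) / (2 * r₁ * r₂))

lemma uniformAngle_far_or_hidden {r₁ r₂ d s : ℝ} (hr₁ : 0 < r₁) (hr₂ : 0 < r₂)
    (hd : 0 ≤ d) (hs : 0 ≤ s) :
    uniformAngle {v | √(r₁ ^ 2 + r₂ ^ 2 - 2 * r₁ * r₂ * cos v) ≤ d →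
        s < √(r₁ ^ 2 + r₂ ^ 2 - 2 * r₁ * r₂ * cos v)} =
      ENNReal.ofReal (farOrHiddenProb r₁ r₂ d s) := by
  simp only [imp_lt_iff_min_lt, lt_sqrt_law_of_cosines_iff hr₁ hr₂ (le_min hs hd)]
  exact uniformAngle_setOf_cos_lt _

lemma farOrHiddenProb_nonneg (r₁ r₂ d s : ℝ) : 0 ≤ farOrHiddenProb r₁ r₂ d s := by
  have := arccos_le_pi ((r₁ ^ 2 + r₂ ^ 2 - min s d ^ 2) / (2 * r₁ * r₂))
  rw [farOrHiddenProb, sub_nonneg, one_div_mul_eq_div, div_le_one pi_pos]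
  exact this

lemma farOrHiddenProb_le_one (r₁ r₂ d s : ℝ) : farOrHiddenProb r₁ r₂ d s ≤ 1 := by
  have := arccos_nonneg ((r₁ ^ 2 + r₂ ^ 2 - min s d ^ 2) / (2 * r₁ * r₂))
  rw [farOrHiddenProb, sub_le_self_iff]
  positivity

lemma continuous_farOrHiddenProb (r₁ r₂ d : ℝ) :
    Continuous (farOrHiddenProb r₁ r₂ d) := by
  unfold farOrHiddenProb
  fun_prop

lemma farOrHiddenProb_eq_one {r₁ r₂ d s : ℝ} (hr₁ : 0 < r₁) (hr₂ : 0 < r₂) (hd : 0 ≤ d)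
    (hs : 0 ≤ s) (hsr : s ≤ r₂ - r₁) : farOrHiddenProb r₁ r₂ d s = 1 := by
  have hmin : min s d ^ 2 ≤ (r₂ - r₁) ^ 2 :=
    pow_le_pow_left₀ (le_min hs hd) ((min_le_left s d).trans hsr) 2
  rw [farOrHiddenProb, arccos_eq_zero.mpr ((one_le_div (by positivity)).mpr (by linarith))]
  ring

lemma farOrHiddenProb_of_le {r₁ r₂ d s : ℝ} (hr₁ : 0 < r₁) (hr₂ : 0 < r₂)
    (hsd : s ≤ d) :
    farOrHiddenProb r₁ r₂ d s =
      1 - 1 / π * arccos (1 - (s ^ 2 - (r₂ - r₁) ^ 2) / (2 * r₁ * r₂)) := by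
  rw [farOrHiddenProb, min_eq_left hsd]
  congr 3
  field_simp
  ring

lemma farOrHiddenProb_of_ge {r₁ r₂ d s : ℝ} (hr₁ : 0 < r₁) (hr₂ : 0 < r₂)
    (hd : d ^ 2 = r₂ ^ 2 - r₁ ^ 2) (hds : d ≤ s) :
    farOrHiddenProb r₁ r₂ d s = 1 - 1 / π * arccos (r₁ / r₂) := by
  rw [farOrHiddenProb, min_eq_right hds, hd]
  congr 3
  field_simp
  ring

lemma rpow_neg_mul_rpow_le_iff {Q β y d : ℝ} (hQ : 0 < Q) (hβ : 0 < β) (hy : 0 ≤ y)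
    (hd : 0 ≤ d) : Q ^ (-β) * y ^ β ≤ d ↔ y ≤ (d * Q ^ β) ^ β⁻¹ := by
  rw [rpow_neg hQ.le, inv_mul_le_iff₀ (rpow_pos_of_pos hQ β), mul_comm,
    le_rpow_inv_iff_of_pos hy (by positivity) hβ]

lemma sq_rpow_neg_half_mul_rpow_half {Q α y : ℝ} (hQ : 0 ≤ Q) (hy : 0 ≤ y) :
    (Q ^ (-(α / 2)) * y ^ (α / 2)) ^ 2 = Q ^ (-α) * y ^ α := by
  rw [mul_pow, ← rpow_mul_natCast hQ, ← rpow_mul_natCast hy]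
  norm_num

lemma integral_Ioc_mul_exp_neg_mul_sq (c : ℝ) {a b : ℝ} (hab : a ≤ b) :
    ∫ x in Ioc a b, 2 * c * x * exp (-(c * x ^ 2)) =
      exp (-(c * a ^ 2)) - exp (-(c * b ^ 2)) := by
  have hderiv : ∀ x ∈ uIcc a b, HasDerivAt (fun t => -exp (-(c * t ^ 2)))
      (2 * c * x * exp (-(c * x ^ 2))) x := fun x _ => by
    refine (((hasDerivAt_pow 2 x).const_mul c).fun_neg.exp.fun_neg).congr_deriv ?_
    push_cast
    ring
  rw [← intervalIntegral.integral_of_le hab,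
    intervalIntegral.integral_eq_sub_of_hasDerivAt hderiv
      ((by fun_prop : Continuous _).intervalIntegrable _ _)]
  ring

lemma map_eq_withDensity_of_cdf {Ω : Type*} [MeasurableSpace Ω] (P : Measure Ω)
    [IsProbabilityMeasure P] {lam : ℝ} (hlam : 0 ≤ lam) {X : Ω → ℝ} (hX : Measurable X)
    (hcdf : ∀ x, 0 ≤ x →
      P {ω | X ω ≤ x} = ENNReal.ofReal (1 - exp (-(lam * π * x ^ 2)))) :
    P.map X = (volume.restrict (Ioi 0)).withDensity
      fun x => ENNReal.ofReal (2 * π * lam * x * exp (-(π * lam * x ^ 2))) := by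
  have := Measure.isProbabilityMeasure_map (μ := P) hX.aemeasurable
  refine Measure.ext_of_Iic _ _ fun a => ?_
  rw [Measure.map_apply hX measurableSet_Iic, withDensity_apply _ measurableSet_Iic,
    Measure.restrict_restrict measurableSet_Iic, Iic_inter_Ioi]
  rcases lt_or_ge a 0 with ha | ha
  · rw [Ioc_eq_empty (not_lt.mpr ha.le), Measure.restrict_empty, lintegral_zero_measure,
      ← nonpos_iff_eq_zero]
    calc P (X ⁻¹' Iic a) ≤ P {ω | X ω ≤ 0} := measure_mono fun ω hω => le_trans hω ha.le
      _ = 0 := by simp [hcdf 0 le_rfl]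
  · have hftc := integral_Ioc_mul_exp_neg_mul_sq (π * lam) ha
    simp only [← mul_assoc] at hftc
    rw [← ofReal_integral_eq_lintegral_ofReal (Continuous.integrableOn_Ioc (by fun_prop))
        (ae_restrict_of_forall_mem measurableSet_Ioc fun x hx => by
          have := hx.1.le
          positivity),
      hftc]
    change P {ω | X ω ≤ a} = _
    rw [hcdf a ha]
    congr 1
    simp only [ne_eq, OfNat.ofNat_ne_zero, not_false_eq_true, zero_pow, mul_zero, neg_zero,
      exp_zero]
    ring_nf

lemma setIntegral_Ioi_eq_add_add {E : Type*} [NormedAddCommGroup E] [NormedSpace ℝ E]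
    {μ : Measure ℝ} {f : ℝ → E} {a b c : ℝ} (hab : a ≤ b) (hbc : b ≤ c)
    (hf : IntegrableOn f (Ioi a) μ) :
    ∫ x in Ioi a, f x ∂μ =
      ∫ x in Ioc a b, f x ∂μ + ∫ x in Ioc b c, f x ∂μ + ∫ x in Ioi c, f x ∂μ := by
  have hb : IntegrableOn f (Ioi b) μ := hf.mono_set (Ioi_subset_Ioi hab)
  rw [← Ioc_union_Ioi_eq_Ioi hab, setIntegral_union (Ioc_disjoint_Ioi le_rfl) measurableSet_Ioi
      (hf.mono_set Ioc_subset_Ioi_self) hb, ← Ioc_union_Ioi_eq_Ioi hbc,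
    setIntegral_union (Ioc_disjoint_Ioi le_rfl) measurableSet_Ioi
      (hb.mono_set Ioc_subset_Ioi_self) (hb.mono_set (Ioi_subset_Ioi hbc)), add_assoc]

lemma integrable_density_mul_farOrHiddenProb_pow (r₁ r₂ d : ℝ) (N : ℕ) {lam α Q : ℝ}
    (hlam : 0 < lam) (hα : 0 < α) :
    Integrable fun y => 2 * π * lam * y * exp (-(π * lam * y ^ 2)) *
      farOrHiddenProb r₁ r₂ d (Q ^ (-(α / 2)) * y ^ (α / 2)) ^ N := by
  have hdensity : Integrable fun y : ℝ => 2 * π * lam * y * exp (-(π * lam * y ^ 2)) := by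
    convert (integrable_mul_exp_neg_mul_sq (by positivity : 0 < π * lam)).const_mul
      (2 * π * lam) using 2
    ring_nf
  refine hdensity.mul_bdd (c := 1) ?_ (ae_of_all _ fun y => ?_)
  · have hτ : Continuous fun y : ℝ => Q ^ (-(α / 2)) * y ^ (α / 2) := by
      fun_prop (disch := positivity)
    exact (((continuous_farOrHiddenProb r₁ r₂ d).comp hτ).pow N).aestronglyMeasurable
  · rw [norm_pow, Real.norm_of_nonneg (farOrHiddenProb_nonneg ..)]
    exact pow_le_one₀ (farOrHiddenProb_nonneg ..) (farOrHiddenProb_le_one ..)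

lemma integral_density_mul_farOrHiddenProb_pow {r_e r_s a_s d_max lam α Q : ℝ} (N : ℕ)
    (hre : 0 < r_e) (hrs : r_e < r_s) (has : a_s = r_s - r_e)
    (hdmax : d_max = √(r_s ^ 2 - r_e ^ 2)) (hlam : 0 < lam) (hα : 0 < α) (hQ : 0 < Q) :
    ∫ y in Ioi 0, 2 * π * lam * y * exp (-(π * lam * y ^ 2)) *
        farOrHiddenProb r_e r_s d_max (Q ^ (-(α / 2)) * y ^ (α / 2)) ^ N =
      (∫ x in Ioc 0 ((a_s * Q ^ (α / 2)) ^ (2 / α)),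
          2 * π * lam * x * exp (-(π * lam * x ^ 2))) +
        2 * π * lam *
          (∫ x in Ioc ((a_s * Q ^ (α / 2)) ^ (2 / α)) ((d_max * Q ^ (α / 2)) ^ (2 / α)),
            (1 - 1 / π * arccos (1 - (Q ^ (-α) * x ^ α - a_s ^ 2) / (2 * r_e * r_s))) ^ N *
              (x * exp (-(π * lam * x ^ 2)))) +
        2 * π * lam *
          (∫ x in Ioi ((d_max * Q ^ (α / 2)) ^ (2 / α)),
            (1 - 1 / π * arccos (r_e / r_s)) ^ N * (x * exp (-(π * lam * x ^ 2)))) := by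
  have hrs0 : 0 < r_s := hre.trans hrs
  have has0 : 0 ≤ a_s := by linarith
  have hd0 : 0 ≤ d_max := hdmax ▸ sqrt_nonneg _
  have hsq : 0 ≤ r_s ^ 2 - r_e ^ 2 := by nlinarith
  have hd2 : d_max ^ 2 = r_s ^ 2 - r_e ^ 2 := by rw [hdmax, sq_sqrt hsq]
  have hasd : a_s ≤ d_max := by rw [hdmax, le_sqrt has0 hsq]; nlinarith
  have hτ0 : ∀ y : ℝ, 0 ≤ y → 0 ≤ Q ^ (-(α / 2)) * y ^ (α / 2) := fun y hy => by positivity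
  have hτ : ∀ {y d : ℝ}, 0 ≤ y → 0 ≤ d →
      (Q ^ (-(α / 2)) * y ^ (α / 2) ≤ d ↔ y ≤ (d * Q ^ (α / 2)) ^ (2 / α)) :=
    fun hy hd => by simpa only [inv_div] using rpow_neg_mul_rpow_le_iff hQ (half_pos hα) hy hd
  have ht0 : ∀ d : ℝ, 0 ≤ d → 0 ≤ (d * Q ^ (α / 2)) ^ (2 / α) := fun d hd => by positivity
  rw [setIntegral_Ioi_eq_add_add (ht0 a_s has0)
    (rpow_le_rpow (by positivity) (by gcongr) (by positivity) :
      (a_s * Q ^ (α / 2)) ^ (2 / α) ≤ (d_max * Q ^ (α / 2)) ^ (2 / α))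
    (integrable_density_mul_farOrHiddenProb_pow _ _ _ N hlam hα).integrableOn,
    ← integral_const_mul, ← integral_const_mul]
  subst has
  congr 1
  congr 1
  · refine setIntegral_congr_fun measurableSet_Ioc fun y hy => ?_
    rw [farOrHiddenProb_eq_one hre hrs0 hd0 (hτ0 y hy.1.le) ((hτ hy.1.le has0).mpr hy.2)]
    ring
  · refine setIntegral_congr_fun measurableSet_Ioc fun y hy => ?_
    have hy0 : 0 ≤ y := (ht0 _ has0).trans hy.1.le
    rw [farOrHiddenProb_of_le hre hrs0 ((hτ hy0 hd0).mpr hy.2),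
      sq_rpow_neg_half_mul_rpow_half hQ.le hy0]
    ring
  · refine setIntegral_congr_fun measurableSet_Ioi fun y hy => ?_
    have hy0 : 0 ≤ y := (ht0 _ hd0).trans hy.le
    rw [farOrHiddenProb_of_ge hre hrs0 hd2 (not_le.mp ((hτ hy0 hd0).not.mpr hy.not_ge)).le]
    ring

theorem stmt13_general {Ω : Type*} [MeasurableSpace Ω] (P : Measure Ω) [IsProbabilityMeasure P]
    (r_e r_s a_s d_max : ℝ) (hre : 0 < r_e) (hrs : r_e < r_s)
    (has : a_s = r_s - r_e) (hdmax : d_max = Real.sqrt (r_s ^ 2 - r_e ^ 2))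
    (N_i : ℕ) (lam_c α Q_s : ℝ) (hlam : 0 < lam_c) (hα : 0 < α)
    (hQs : 0 < Q_s)
    (Θ : Fin N_i → Ω → ℝ) (hΘmeas : ∀ k, Measurable (Θ k))
    (hΘindep : iIndepFun Θ P)
    (hΘunif : ∀ k, P.map (Θ k) = (ENNReal.ofReal (2 * π))⁻¹ • volume.restrict (Icc (-π) π))
    (D : Fin N_i → Ω → ℝ)
    (hD : ∀ k ω, D k ω = Real.sqrt (r_e ^ 2 + r_s ^ 2 - 2 * r_e * r_s * Real.cos (Θ k ω)))
    (D_c : Ω → ℝ) (hDcmeas : Measurable D_c)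
    (hDcdist : ∀ x, 0 ≤ x →
      P {ω | D_c ω ≤ x} = ENNReal.ofReal (1 - Real.exp (-(lam_c * π * x ^ 2))))
    (hindep : IndepFun (fun ω k => Θ k ω) D_c P) :
    P {ω | ∀ k, D k ω ≤ d_max → Q_s ^ (-(α / 2)) * D_c ω ^ (α / 2) < D k ω} =
      ENNReal.ofReal
        ((∫ x in Ioc (0:ℝ) ((a_s * Q_s ^ (α / 2)) ^ (2 / α)),
            2 * π * lam_c * x * Real.exp (-(π * lam_c * x ^ 2))) +
          2 * π * lam_c *
            (∫ x in Ioc ((a_s * Q_s ^ (α / 2)) ^ (2 / α)) ((d_max * Q_s ^ (α / 2)) ^ (2 / α)),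
              (1 - (1 / π) *
                  Real.arccos (1 - (Q_s ^ (-α) * x ^ α - a_s ^ 2) / (2 * r_e * r_s))) ^ N_i *
                (x * Real.exp (-(π * lam_c * x ^ 2)))) +
          2 * π * lam_c *
            (∫ x in Ioi ((d_max * Q_s ^ (α / 2)) ^ (2 / α)),
              (1 - (1 / π) * Real.arccos (r_e / r_s)) ^ N_i *
                (x * Real.exp (-(π * lam_c * x ^ 2))))) := by
  have hrs0 : 0 < r_s := hre.trans hrs
  have hd0 : 0 ≤ d_max := hdmax ▸ sqrt_nonneg _
  let A : Set (ℝ × ℝ) := {z | √(r_e ^ 2 + r_s ^ 2 - 2 * r_e * r_s * cos z.2) ≤ d_max →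
      Q_s ^ (-(α / 2)) * z.1 ^ (α / 2) < √(r_e ^ 2 + r_s ^ 2 - 2 * r_e * r_s * cos z.2)}
  have hA : MeasurableSet A := .imp (measurableSet_le (by fun_prop) measurable_const)
    (measurableSet_lt (by fun_prop (disch := positivity)) (by fun_prop))
  have hevent : {ω | ∀ k, D k ω ≤ d_max → Q_s ^ (-(α / 2)) * D_c ω ^ (α / 2) < D k ω} =
      {ω | ∀ k, (D_c ω, Θ k ω) ∈ A} := by
    simp only [hD]
    rfl
  have hint := (integrable_density_mul_farOrHiddenProb_pow r_e r_s d_max N_i hlam hα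
    (Q := Q_s)).integrableOn (s := Ioi 0)
  rw [hevent, measure_forall_mem_eq_lintegral_pow P hDcmeas hΘmeas hΘindep (ν := uniformAngle)
      hΘunif hindep hA,
    map_eq_withDensity_of_cdf P hlam.le hDcmeas hDcdist,
    lintegral_withDensity_eq_lintegral_mul_non_measurable _ (by fun_prop)
      (ae_of_all _ fun _ => ENNReal.ofReal_lt_top), Fintype.card_fin,
    ← integral_density_mul_farOrHiddenProb_pow N_i hre hrs has hdmax hlam hα hQs,
    ofReal_integral_eq_lintegral_ofReal hint (ae_restrict_of_forall_mem measurableSet_Ioi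
      fun y (hy : 0 < y) =>
        mul_nonneg (by positivity) (pow_nonneg (farOrHiddenProb_nonneg ..) _))]
  refine setLIntegral_congr_fun measurableSet_Ioi fun y (hy : 0 < y) => ?_
  have hslice : uniformAngle (Prod.mk y ⁻¹' A) =
      ENNReal.ofReal (farOrHiddenProb r_e r_s d_max (Q_s ^ (-(α / 2)) * y ^ (α / 2))) :=
    uniformAngle_far_or_hidden (s := Q_s ^ (-(α / 2)) * y ^ (α / 2)) hre hrs0 hd0
      (by positivity)
  rw [Pi.mul_apply, hslice, ← ENNReal.ofReal_pow (farOrHiddenProb_nonneg ..),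
    ← ENNReal.ofReal_mul (by positivity)]

/-- The association probability that a typical user associates with the nearest
cloud server: every visible satellite is farther than Q_s^{−α/2} D_c^{α/2}, and this
probability equals the stated sum of three integrals. -/
theorem stmt13 {Ω : Type*} [MeasurableSpace Ω] (P : Measure Ω) [IsProbabilityMeasure P]
    (r_e r_s a_s d_max : ℝ) (hre : 0 < r_e) (hrs : r_e < r_s)
    (has : a_s = r_s - r_e) (hdmax : d_max = Real.sqrt (r_s ^ 2 - r_e ^ 2))
    (N_i : ℕ) (hNi : 0 < N_i) (lam_c α Q_s : ℝ) (hlam : 0 < lam_c) (hα : 0 < α)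
    (hQs : 0 < Q_s)
    (Θ : Fin N_i → Ω → ℝ) (hΘmeas : ∀ k, Measurable (Θ k))
    (hΘindep : iIndepFun Θ P)
    (hΘunif : ∀ k, P.map (Θ k) = (ENNReal.ofReal (2 * π))⁻¹ • volume.restrict (Icc (-π) π))
    (D : Fin N_i → Ω → ℝ)
    (hD : ∀ k ω, D k ω = Real.sqrt (r_e ^ 2 + r_s ^ 2 - 2 * r_e * r_s * Real.cos (Θ k ω)))
    (D_c : Ω → ℝ) (hDcmeas : Measurable D_c)
    (hDcdist : ∀ x, 0 ≤ x →
      P {ω | D_c ω ≤ x} = ENNReal.ofReal (1 - Real.exp (-(lam_c * π * x ^ 2))))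
    (hindep : IndepFun (fun ω k => Θ k ω) D_c P) :
    P {ω | ∀ k, D k ω ≤ d_max → Q_s ^ (-(α / 2)) * D_c ω ^ (α / 2) < D k ω} =
      ENNReal.ofReal
        ((∫ x in Ioc (0:ℝ) ((a_s * Q_s ^ (α / 2)) ^ (2 / α)),
            2 * π * lam_c * x * Real.exp (-(π * lam_c * x ^ 2))) +
          2 * π * lam_c *
            (∫ x in Ioc ((a_s * Q_s ^ (α / 2)) ^ (2 / α)) ((d_max * Q_s ^ (α / 2)) ^ (2 / α)),
              (1 - (1 / π) *
                  Real.arccos (1 - (Q_s ^ (-α) * x ^ α - a_s ^ 2) / (2 * r_e * r_s))) ^ N_i *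
                (x * Real.exp (-(π * lam_c * x ^ 2)))) +
          2 * π * lam_c *
            (∫ x in Ioi ((d_max * Q_s ^ (α / 2)) ^ (2 / α)),
              (1 - (1 / π) * Real.arccos (r_e / r_s)) ^ N_i *
                (x * Real.exp (-(π * lam_c * x ^ 2))))) :=
  stmt13_general P r_e r_s a_s d_max hre hrs has hdmax N_i lam_c α Q_s hlam hα hQs Θ hΘmeas hΘindep
    hΘunif D hD D_c hDcmeas hDcdist hindep
end
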